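/- arXiv:math/0302252 — 2 statements merged into one kernel-verified Lean document; each statement's English description precedes it below -/
import Mathlib

section
/- Let w ↦ ŵ be a bijection between sets M and M̂ of monomials over X such that: (i) for every w in M, the monomials w and ŵ have the same extremal letters, and (ii) for all u, v in M and every letter x, if ∂_x u ≤ ∂_x v then ∂_x û ≤ ∂_x v̂. If M̂ is an antichain and I(M) is finitely generated, then I(M̂) is finitely generated. -/
variable {X : Type*} [LinearOrder X]

/-- The canonical projection from words to monomials (exponent vectors). -/
noncomputable def piW (w : List X) : X →₀ ℕ := Multiset.toFinsupp (↑w : Multiset X)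

/-- The section sending a monomial to the unique sorted word in its fiber. -/
noncomputable def sigmaW (m : X →₀ ℕ) : List X := (Finsupp.toMultiset m).sort (· ≤ ·)

/-- The sorting map on words. -/
noncomputable def sortW (w : List X) : List X := sigmaW (piW w)

/-- The two-sided ideal of the free monoid generated by a set of words. -/
def wordIdeal (T : Set (List X)) : Set (List X) := {v | ∃ t ∈ T, t <:+: v}

/-- The ideal of the free commutative monoid generated by a set of monomials. -/
def monIdeal (M : Set (X →₀ ℕ)) : Set (X →₀ ℕ) := {v | ∃ m ∈ M, m ≤ v}

/-- `I(M)`, the ideal of the free monoid generated by the sorted words of members of `M`. -/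
def IM (M : Set (X →₀ ℕ)) : Set (List X) := wordIdeal (sigmaW '' M)

/-- A letter is extremal in a monomial if it is the least or greatest letter of its support. -/
def Extremal (w : X →₀ ℕ) (x : X) : Prop :=
  x ∈ w.support ∧ ((∀ y ∈ w.support, x ≤ y) ∨ (∀ y ∈ w.support, y ≤ x))

/-- A letter is internal to a monomial if it lies strictly between its extremal letters. -/
def Internal (w : X →₀ ℕ) (x : X) : Prop :=
  (∃ a ∈ w.support, a < x) ∧ (∃ b ∈ w.support, x < b)

/-- A set of monomials is an antichain if no member divides another. -/
def IsMonAntichain (M : Set (X →₀ ℕ)) : Prop := ∀ u ∈ M, ∀ v ∈ M, u ≤ v → u = v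

/-- An ideal of the free monoid is finitely generated. -/
def FGIdeal (J : Set (List X)) : Prop := ∃ T : Set (List X), T.Finite ∧ wordIdeal T = J

lemma sigmaW_sorted (m : X →₀ ℕ) : List.Pairwise (· ≤ ·) (sigmaW m) :=
  Multiset.pairwise_sort _ _

lemma coe_sigmaW (m : X →₀ ℕ) : (↑(sigmaW m) : Multiset X) = Finsupp.toMultiset m :=
  Multiset.sort_eq _ _

lemma piW_sigmaW (m : X →₀ ℕ) : piW (sigmaW m) = m := by
  rw [piW, coe_sigmaW, Finsupp.toMultiset_toFinsupp]

lemma mem_sigmaW {m : X →₀ ℕ} {x : X} : x ∈ sigmaW m ↔ x ∈ m.support := by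
  rw [sigmaW, Multiset.mem_sort, Finsupp.mem_toMultiset]

lemma eq_sigmaW {w : List X} {m : X →₀ ℕ} (hs : List.Pairwise (· ≤ ·) w)
    (hm : (↑w : Multiset X) = Finsupp.toMultiset m) : w = sigmaW m := by
  apply List.Perm.eq_of_pairwise' hs (sigmaW_sorted m)
  rw [← Multiset.coe_eq_coe, coe_sigmaW, hm]

lemma piW_append (l₁ l₂ : List X) : piW (l₁ ++ l₂) = piW l₁ + piW l₂ := by
  simp [piW, ← Multiset.coe_add, Multiset.toFinsupp_add]

lemma piW_apply (l : List X) (x : X) : piW l x = Multiset.count x (↑l : Multiset X) := by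
  simp [piW]

lemma infix_sigmaW_iff {u v : X →₀ ℕ} :
    sigmaW u <:+: sigmaW v ↔ u ≤ v ∧ ∀ x, Internal u x → u x = v x := by
  constructor
  · rintro ⟨s, t, h⟩
    have hv : piW s + u + piW t = v := by
      have := congrArg piW h
      rwa [piW_append, piW_append, piW_sigmaW, piW_sigmaW] at this
    have hsv := sigmaW_sorted v
    rw [← h] at hsv
    obtain ⟨h1, h2, h3⟩ := List.pairwise_append.mp hsv
    obtain ⟨hs1, hs2, hcross⟩ := List.pairwise_append.mp h1
    constructor
    · intro x
      have := congrFun (congrArg (fun g : X →₀ ℕ => (g : X → ℕ)) hv) x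
      simp only [Finsupp.coe_add, Pi.add_apply] at this
      omega
    · rintro x ⟨⟨a, ha, hax⟩, ⟨b, hb, hxb⟩⟩
      have hxs : x ∉ s := by
        intro hx
        exact absurd (hcross x hx a (mem_sigmaW.mpr ha)) (not_le.mpr hax)
      have hxt : x ∉ t := by
        intro hx
        exact absurd (h3 b (List.mem_append.mpr (Or.inr (mem_sigmaW.mpr hb))) x hx)
          (not_le.mpr hxb)
      have h1 : piW s x = 0 := by
        rw [piW_apply, Multiset.count_eq_zero]; simpa using hxs
      have h2 : piW t x = 0 := by
        rw [piW_apply, Multiset.count_eq_zero]; simpa using hxt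
      have := congrFun (congrArg (fun g : X →₀ ℕ => (g : X → ℕ)) hv) x
      simp only [Finsupp.coe_add, Pi.add_apply] at this
      omega
  · rintro ⟨hle, hint⟩
    by_cases hu : u = 0
    · subst hu
      have : sigmaW (0 : X →₀ ℕ) = [] := by simp [sigmaW]
      rw [this]
      exact List.nil_infix
    · have hne : u.support.Nonempty := Finsupp.support_nonempty_iff.mpr hu
      set a := u.support.min' hne with ha
      set b := u.support.max' hne with hb
      have hmin : ∀ y ∈ u.support, a ≤ y := fun y hy => u.support.min'_le y hy
      have hmax : ∀ y ∈ u.support, y ≤ b := fun y hy => u.support.le_max' y hy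
      have hab : a ≤ b := hmax a (u.support.min'_mem hne)
      set d := v - u with hd
      have hvd : u + d = v := add_tsub_cancel_of_le hle
      set D := Finsupp.toMultiset d with hD
      set A := (D.filter (· ≤ a)).sort (· ≤ ·) with hA
      set B := (D.filter (fun x => ¬ x ≤ a)).sort (· ≤ ·) with hB
      have hmemA : ∀ y ∈ A, y ≤ a := by
        intro y hy
        rw [hA, Multiset.mem_sort, Multiset.mem_filter] at hy
        exact hy.2
      have hmemB : ∀ y ∈ B, b ≤ y := by
        intro y hy
        rw [hB, Multiset.mem_sort, Multiset.mem_filter] at hy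
        obtain ⟨hyD, hya⟩ := hy
        rw [hD, Finsupp.mem_toMultiset, Finsupp.mem_support_iff] at hyD
        have hduy : u y < v y := by
          have : d y = v y - u y := by rw [hd]; exact Finsupp.tsub_apply v u y
          rw [this] at hyD
          omega
        by_contra hby
        push_neg at hby
        have : Internal u y :=
          ⟨⟨a, u.support.min'_mem hne, not_le.mp hya⟩, ⟨b, u.support.max'_mem hne, hby⟩⟩
        exact absurd (hint y this) (Nat.ne_of_lt hduy)
      have hWs : List.Pairwise (· ≤ ·) (A ++ sigmaW u ++ B) := by
        apply List.pairwise_append.mpr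
        rw [List.pairwise_append]
        refine ⟨⟨Multiset.pairwise_sort _ _, sigmaW_sorted u, ?_⟩, Multiset.pairwise_sort _ _, ?_⟩
        · intro p hp q hq
          exact le_trans (hmemA p hp) (hmin q (mem_sigmaW.mp hq))
        · intro p hp q hq
          rcases List.mem_append.mp hp with hp | hp
          · exact le_trans (hmemA p hp) (le_trans hab (hmemB q hq))
          · exact le_trans (hmax p (mem_sigmaW.mp hp)) (hmemB q hq)
      have hWm : (↑(A ++ sigmaW u ++ B) : Multiset X) = Finsupp.toMultiset v := by
        rw [← Multiset.coe_add, ← Multiset.coe_add, hA, hB, Multiset.sort_eq,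
          Multiset.sort_eq, coe_sigmaW]
        have hfil : (D.filter (· ≤ a)) + (D.filter (fun x => ¬ x ≤ a)) = D :=
          Multiset.filter_add_not _ _
        calc D.filter (· ≤ a) + Finsupp.toMultiset u + D.filter (fun x => ¬ x ≤ a)
            = Finsupp.toMultiset u + (D.filter (· ≤ a) + D.filter (fun x => ¬ x ≤ a)) := by
              rw [add_comm (D.filter (· ≤ a)) (Finsupp.toMultiset u), add_assoc]
          _ = Finsupp.toMultiset u + D := by rw [hfil]
          _ = Finsupp.toMultiset (u + d) := by rw [Finsupp.toMultiset_add]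
          _ = Finsupp.toMultiset v := by rw [hvd]
      exact ⟨A, B, (eq_sigmaW hWs hWm).symm ▸ rfl⟩


/-- If a bijection `w ↦ ŵ` between `M` and `M̂` preserves extremal letters and exponent
comparisons, `M̂` is an antichain and `I(M)` is finitely generated, then `I(M̂)` is
finitely generated. -/
theorem stmt7 (M Mh : Set (X →₀ ℕ)) (f : (X →₀ ℕ) → (X →₀ ℕ))
    (hbij : Set.BijOn f M Mh)
    (hext : ∀ w ∈ M, ∀ x : X, Extremal w x ↔ Extremal (f w) x)
    (hord : ∀ u ∈ M, ∀ v ∈ M, ∀ x : X, u x ≤ v x → f u x ≤ f v x)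
    (hanti : IsMonAntichain Mh) (hfg : FGIdeal (IM M)) :
    FGIdeal (IM Mh) := by
  obtain ⟨T, hTfin, hT⟩ := hfg
  have hTm : ∀ t : T, ∃ m, m ∈ M ∧ sigmaW m <:+: (t : List X) := by
    intro t
    have ht : (t : List X) ∈ IM M := by
      rw [← hT]; exact ⟨t, t.2, List.infix_refl _⟩
    obtain ⟨w, ⟨m, hm, rfl⟩, hw⟩ := ht
    exact ⟨m, hm, hw⟩
  choose g hgM hg using hTm
  have : Finite T := hTfin.to_subtype
  refine ⟨sigmaW '' (f '' Set.range g), ((Set.finite_range g).image f).image sigmaW, ?_⟩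
  apply Set.Subset.antisymm
  · rintro v ⟨w, ⟨mh, ⟨m0, ⟨t, rfl⟩, rfl⟩, rfl⟩, hwv⟩
    exact ⟨sigmaW (f (g t)), ⟨f (g t), hbij.mapsTo (hgM t), rfl⟩, hwv⟩
  · rintro v ⟨w, ⟨mh, hmh, rfl⟩, hwv⟩
    obtain ⟨m, hmM, rfl⟩ := hbij.surjOn hmh
    have hsm : sigmaW m ∈ wordIdeal T := by
      rw [hT]; exact ⟨sigmaW m, ⟨m, hmM, rfl⟩, List.infix_refl _⟩
    obtain ⟨t, htT, hts⟩ := hsm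
    set m0 := g ⟨t, htT⟩ with hm0def
    have hm0 : m0 ∈ M := hgM ⟨t, htT⟩
    have h0 : sigmaW m0 <:+: sigmaW m := (hg ⟨t, htT⟩).trans hts
    obtain ⟨hle, hint⟩ := infix_sigmaW_iff.mp h0
    have hle' : f m0 ≤ f m :=
      Finsupp.le_def.mpr fun x => hord _ hm0 _ hmM x (Finsupp.le_def.mp hle x)
    have hint' : ∀ x, Internal (f m0) x → f m0 x = f m x := by
      rintro x ⟨⟨p, hp, hpx⟩, ⟨q, hq, hxq⟩⟩
      have hne : (f m0).support.Nonempty := ⟨p, hp⟩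
      have e1 : Extremal (f m0) ((f m0).support.min' hne) :=
        ⟨Finset.min'_mem _ _, Or.inl fun y hy => Finset.min'_le _ _ hy⟩
      have e2 : Extremal (f m0) ((f m0).support.max' hne) :=
        ⟨Finset.max'_mem _ _, Or.inr fun y hy => Finset.le_max' _ _ hy⟩
      have i1 : ((f m0).support.min' hne) ∈ m0.support := ((hext _ hm0 _).mpr e1).1
      have i2 : ((f m0).support.max' hne) ∈ m0.support := ((hext _ hm0 _).mpr e2).1
      have hIx : Internal m0 x :=
        ⟨⟨_, i1, lt_of_le_of_lt (Finset.min'_le _ _ hp) hpx⟩,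
         ⟨_, i2, lt_of_lt_of_le hxq (Finset.le_max' _ _ hq)⟩⟩
      have heq := hint x hIx
      exact le_antisymm (hord _ hm0 _ hmM x (le_of_eq heq))
        (hord _ hmM _ hm0 x (le_of_eq heq.symm))
    have h2 : sigmaW (f m0) <:+: sigmaW (f m) := infix_sigmaW_iff.mpr ⟨hle', hint'⟩
    exact ⟨sigmaW (f m0), ⟨f m0, ⟨m0, ⟨⟨t, htT⟩, rfl⟩, rfl⟩, rfl⟩, h2.trans hwv⟩
end

section
/- Let M be a set of quadratic monomials over X. A linear order ≺ on X is cool for M if and only if for all letters x ≺ y ≺ z with xz ∈ M, at least one of the monomials y², xy, yz lies in M. -/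
variable {X : Type*}

/-- A letter is extremal in a monomial (w.r.t. the linear order `r`) if it is the
least or greatest letter of its support. -/
def ExtremalO (r : LinearOrder X) (w : X →₀ ℕ) (x : X) : Prop :=
  x ∈ w.support ∧ ((∀ y ∈ w.support, r.le x y) ∨ (∀ y ∈ w.support, r.le y x))

/-- A letter is internal to a monomial (w.r.t. the linear order `r`) if it lies strictly
between its extremal letters. -/
def InternalO (r : LinearOrder X) (w : X →₀ ℕ) (x : X) : Prop :=
  (∃ a ∈ w.support, r.lt a x) ∧ (∃ b ∈ w.support, r.lt x b)

/-- A linear order `r` on the letters is cool for a set `M` of monomials if for every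
`w ∈ M` and letter `x` internal to `w` there is `s ∈ M` with `x` extremal in `s` and
`s/x` dividing `w`. -/
def Cool (r : LinearOrder X) (M : Set (X →₀ ℕ)) : Prop :=
  ∀ w ∈ M, ∀ x : X, InternalO r w x → ∃ s ∈ M, ExtremalO r s x ∧ Finsupp.erase x s ≤ w

/-- The quadratic monomial `xy` (which is `x²` when `x = y`). -/
noncomputable def quadMon (x y : X) : X →₀ ℕ := Finsupp.single x 1 + Finsupp.single y 1

open Classical in
lemma quadMon_apply (x y a : X) :
    quadMon x y a = (if x = a then 1 else 0) + (if y = a then 1 else 0) := by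
  simp [quadMon, Finsupp.single_apply]

lemma quadMon_comm (x y : X) : quadMon x y = quadMon y x := add_comm _ _

lemma mem_support_quadMon {x y a : X} (h : a ∈ (quadMon x y).support) : a = x ∨ a = y := by
  classical
  rw [Finsupp.mem_support_iff, quadMon_apply] at h
  by_contra hc
  push_neg at hc
  simp [Ne.symm hc.1, Ne.symm hc.2] at h

/-- Structure of degree-2 monomials: any such monomial with `y` in its support
is `quadMon y t` for some `t`. -/
lemma deg2 (m : X →₀ ℕ) (h : (m.sum fun _ e => e) = 2) {y : X} (hy : y ∈ m.support) :
    ∃ t, m = quadMon y t := by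
  classical
  have hsum : ∑ a ∈ m.support, m a = 2 := h
  by_cases hone : ∀ a ∈ m.support, a = y
  · refine ⟨y, ?_⟩
    have hsupp : m.support = {y} := Finset.eq_singleton_iff_unique_mem.mpr ⟨hy, hone⟩
    have hmy : m y = 2 := by rwa [hsupp, Finset.sum_singleton] at hsum
    ext a
    rcases eq_or_ne a y with rfl | hay
    · simp [quadMon_apply, hmy]
    · have ha : m a = 0 := by
        rw [← Finsupp.notMem_support_iff]
        exact fun hh => hay (hone a hh)
      simp [quadMon_apply, ha, Ne.symm hay]
  · push_neg at hone
    obtain ⟨t, ht, hty⟩ := hone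
    have hyt : y ≠ t := Ne.symm hty
    refine ⟨t, ?_⟩
    have hy1 : 1 ≤ m y := Nat.one_le_iff_ne_zero.mpr (Finsupp.mem_support_iff.mp hy)
    have ht1 : 1 ≤ m t := Nat.one_le_iff_ne_zero.mpr (Finsupp.mem_support_iff.mp ht)
    have hsub : ({y, t} : Finset X) ⊆ m.support := by
      intro a ha
      rcases Finset.mem_insert.mp ha with rfl | ha
      · exact hy
      · rw [Finset.mem_singleton] at ha; exact ha ▸ ht
    have h2 : ∑ a ∈ ({y, t} : Finset X), m a ≤ 2 :=
      hsum ▸ Finset.sum_le_sum_of_subset hsub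
    rw [Finset.sum_insert (by simp [hyt]), Finset.sum_singleton] at h2
    have hmy : m y = 1 := by omega
    have hmt : m t = 1 := by omega
    have hrest : ∀ a, a ≠ y → a ≠ t → m a = 0 := by
      intro a hay hat
      by_contra h0
      have ha : a ∈ m.support := Finsupp.mem_support_iff.mpr h0
      have hsub3 : ({y, t, a} : Finset X) ⊆ m.support := by
        intro b hb
        rcases Finset.mem_insert.mp hb with rfl | hb
        · exact hy
        rcases Finset.mem_insert.mp hb with rfl | hb
        · exact ht
        · rw [Finset.mem_singleton] at hb; exact hb ▸ ha
      have h3 : ∑ b ∈ ({y, t, a} : Finset X), m b ≤ 2 :=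
        hsum ▸ Finset.sum_le_sum_of_subset hsub3
      rw [Finset.sum_insert (by simp [hyt, Ne.symm hay]), Finset.sum_insert (by simp [Ne.symm hat]),
        Finset.sum_singleton] at h3
      have ha1 : 1 ≤ m a := Nat.one_le_iff_ne_zero.mpr h0
      omega
    ext a
    rcases eq_or_ne a y with rfl | hay
    · simp [quadMon_apply, hmy, hty]
    rcases eq_or_ne a t with rfl | hat
    · simp [quadMon_apply, hmt, hyt]
    · simp [quadMon_apply, hrest a hay hat, Ne.symm hay, Ne.symm hat]

/-- For a set of quadratic monomials, an order is cool iff whenever `x ≺ y ≺ z` and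
`xz ∈ M`, one of `y²`, `xy`, `yz` is in `M`. -/
theorem stmt14 (M : Set (X →₀ ℕ)) (hq : ∀ m ∈ M, (m.sum fun _ e => e) = 2)
    (r : LinearOrder X) :
    Cool r M ↔
      ∀ x y z : X, r.lt x y → r.lt y z → quadMon x z ∈ M →
        (quadMon y y ∈ M ∨ quadMon x y ∈ M ∨ quadMon y z ∈ M) := by
  classical
  letI := r
  constructor
  · intro hc x y z hxy hyz hxz
    have hxz' : x ≠ z := ne_of_lt (lt_trans hxy hyz)
    have hint : InternalO r (quadMon x z) y := by
      refine ⟨⟨x, ?_, hxy⟩, ⟨z, ?_, hyz⟩⟩ <;>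
        simp [Finsupp.mem_support_iff, quadMon_apply, hxz', Ne.symm hxz']
    obtain ⟨s, hsM, hext, hle⟩ := hc _ hxz y hint
    obtain ⟨t, rfl⟩ := deg2 s (hq s hsM) hext.1
    rcases eq_or_ne t y with rfl | hty
    · exact Or.inl hsM
    · have h1 : (Finsupp.erase y (quadMon y t)) t ≤ quadMon x z t := Finsupp.le_def.mp hle t
      rw [Finsupp.erase_ne hty] at h1
      rw [quadMon_apply, quadMon_apply] at h1
      simp only [if_neg (Ne.symm hty), if_pos rfl] at h1
      rcases eq_or_ne t x with rfl | htx
      · exact Or.inr (Or.inl (by rw [← quadMon_comm]; exact hsM))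
      rcases eq_or_ne t z with rfl | htz
      · exact Or.inr (Or.inr hsM)
      · simp [Ne.symm htx, Ne.symm htz] at h1
  · intro h w hw x hint
    obtain ⟨⟨a, ha, hax⟩, ⟨b, hb, hxb⟩⟩ := hint
    have hax' : (a : X) < x := hax
    have hxb' : (x : X) < b := hxb
    have hab : a ≠ b := ne_of_lt (lt_trans hax' hxb')
    obtain ⟨t, rfl⟩ := deg2 w (hq w hw) ha
    have hbt : b = t := by
      rcases mem_support_quadMon hb with rfl | rfl
      · exact absurd rfl hab
      · rfl
    subst hbt
    rcases h a x b hax hxb hw with h1 | h2 | h3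
    · refine ⟨quadMon x x, h1, ⟨?_, Or.inl ?_⟩, ?_⟩
      · simp [Finsupp.mem_support_iff, quadMon_apply]
      · intro u hu
        rcases mem_support_quadMon hu with rfl | rfl <;> exact le_refl _
      · rw [Finsupp.le_def]
        intro c
        rcases eq_or_ne c x with rfl | hcx
        · simp [Finsupp.erase_same]
        · rw [Finsupp.erase_ne hcx]
          simp [quadMon_apply, Ne.symm hcx]
    · have haxne : a ≠ x := ne_of_lt hax'
      refine ⟨quadMon a x, h2, ⟨?_, Or.inr ?_⟩, ?_⟩
      · simp [Finsupp.mem_support_iff, quadMon_apply, haxne]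
      · intro u hu
        rcases mem_support_quadMon hu with rfl | rfl
        · exact le_of_lt hax'
        · exact le_refl _
      · rw [Finsupp.le_def]
        intro c
        rcases eq_or_ne c x with rfl | hcx
        · simp [Finsupp.erase_same]
        · rw [Finsupp.erase_ne hcx]
          rw [quadMon_apply, quadMon_apply]
          simp only [if_neg (Ne.symm hcx)]
          split_ifs <;> omega
    · have hxbne : x ≠ b := ne_of_lt hxb'
      refine ⟨quadMon x b, h3, ⟨?_, Or.inl ?_⟩, ?_⟩
      · simp [Finsupp.mem_support_iff, quadMon_apply]
      · intro u hu
        rcases mem_support_quadMon hu with rfl | rfl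
        · exact le_refl _
        · exact le_of_lt hxb'
      · rw [Finsupp.le_def]
        intro c
        rcases eq_or_ne c x with rfl | hcx
        · simp [Finsupp.erase_same]
        · rw [Finsupp.erase_ne hcx]
          rw [quadMon_apply, quadMon_apply]
          simp only [if_neg (Ne.symm hcx)]
          split_ifs <;> omega
end
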